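/- Suppose Assumption (A) holds and let δ > 0, α ∈ [0,1). Then there exists R > 0 such that, with Q and V defined using this R, the Lyapunov dissipation inequality ∇V(x)·F(x) < 0 holds for all x ∈ ℝ² \ {0}, where F(x1,x2) := (b(g(x2)−1) + D*·g(x2)(1−e^{x1}), p(x2)(D(x1,x2) − D*·g(x2)·e^{x1})) is the closed-loop vector field. -/

import Mathlib

/-!
Along the closed-loop field, `∇V · F = (e^{x₁} - 1) F₁ + Q'(x₂) F₂` with
`F₂ = D* g e^{x₁} (e^{-x₂} - 1)` plus `p` times the feedback term on `x₂ ≤ 0`.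
For `x₂ < 0` the weight `b / (2 D* δ)` of the integral in `Q` lets the feedback term absorb, by
AM-GM, the cross term `(e^{x₁} - 1) b (g - 1)`. For `x₂ > 0`, Assumption (A) gives a margin
`g (b + D*) - b = p₀ μ(S) - b ≥ m > 0`, which makes the first summand negative when `e^{x₁}` is
small; otherwise that summand is at most `b² (g - 1)² / (4 D* g) = O((e^{x₂} - 1)²)`, because `μ`
is Lipschitz on `[S*, S_in]`, and a large `R` dominates it.
-/

open Real Set

theorem hasDerivAt_ite_le_zero {f h f' h' : ℝ → ℝ} (hf : ∀ z, HasDerivAt f (f' z) z)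
    (hh : ∀ z, HasDerivAt h (h' z) z) (h0 : f 0 = h 0) (h0' : f' 0 = h' 0) (z : ℝ) :
    HasDerivAt (fun z => if z ≤ 0 then f z else h z) (if z ≤ 0 then f' z else h' z) z := by
  rcases lt_trichotomy z 0 with hz | rfl | hz
  · rw [if_pos hz.le]
    refine (hf z).congr_of_eventuallyEq ?_
    filter_upwards [Iio_mem_nhds hz] with u hu using if_pos hu.le
  · rw [if_pos le_rfl]
    have hl : HasDerivWithinAt (fun z => if z ≤ 0 then f z else h z) (f' 0) (Iic 0) 0 :=
      (hf 0).hasDerivWithinAt.congr (fun u hu => if_pos hu) (if_pos le_rfl)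
    have hr : HasDerivWithinAt (fun z => if z ≤ 0 then f z else h z) (f' 0) (Ici 0) 0 := by
      rw [h0']
      refine (hh 0).hasDerivWithinAt.congr (fun u hu => ?_) (by simp [h0])
      rcases (mem_Ici.1 hu).eq_or_lt with rfl | hu
      · simp [h0]
      · exact if_neg hu.not_ge
    simpa only [Iic_union_Ici] using (hl.union hr).hasDerivAt (by simp)
  · rw [if_neg hz.not_ge]
    refine (hh z).congr_of_eventuallyEq ?_
    filter_upwards [Ioi_mem_nhds hz] with u hu using if_neg hu.not_ge

theorem hasDerivAt_ite_integral {c R : ℝ} {f ι Q : ℝ → ℝ} (hf : Continuous f) (hι : Continuous ι)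
    (hf0 : f 0 = 0) (hι0 : ι 0 = 0)
    (hQ : ∀ z, Q z = if z ≤ 0 then 1 / 2 * z ^ 2 + c * ∫ s in z..0, f s
      else R * ∫ s in 0..z, ι s) (z : ℝ) :
    HasDerivAt Q (if z ≤ 0 then z - c * f z else R * ι z) z := by
  have hneg : ∀ z, HasDerivAt (fun z => 1 / 2 * z ^ 2 + c * ∫ s in z..0, f s) (z - c * f z) z := by
    intro z
    simp_rw [intervalIntegral.integral_symm 0]
    have := ((hasDerivAt_pow 2 z).const_mul (1 / 2)).add
      ((hf.integral_hasStrictDerivAt 0 z).hasDerivAt.neg.const_mul c)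
    exact this.congr_deriv (by push_cast; ring)
  have hpos : ∀ z, HasDerivAt (fun z => R * ∫ s in 0..z, ι s) (R * ι z) z := fun z =>
    (hι.integral_hasStrictDerivAt 0 z).hasDerivAt.const_mul R
  rw [funext hQ]
  exact hasDerivAt_ite_le_zero hneg hpos (by simp) (by simp [hf0, hι0]) z

theorem fderiv_fst_add_snd_apply {φ ψ : ℝ → ℝ} {φ' ψ' : ℝ} {x : ℝ × ℝ}
    (hφ : HasDerivAt φ φ' x.1) (hψ : HasDerivAt ψ ψ' x.2) (v : ℝ × ℝ) :
    fderiv ℝ (fun y : ℝ × ℝ => φ y.1 + ψ y.2) x v = φ' * v.1 + ψ' * v.2 := by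
  have : HasFDerivAt (fun y : ℝ × ℝ => φ y.1 + ψ y.2) _ x :=
    (hφ.comp_hasFDerivAt x hasFDerivAt_fst).add
      (hψ.comp_hasFDerivAt x (hasFDerivAt_snd (𝕜 := ℝ) (E := ℝ) (p := x)))
  rw [this.fderiv]
  simp

section Dissipation

variable {b D u G : ℝ}

theorem cross_term_le (hD : 0 < D) (hG : 0 < G) :
    (u - 1) * (b * (G - 1) + D * G * (1 - u)) ≤ (b * (G - 1)) ^ 2 / (4 * D * G) := by
  rw [le_div_iff₀ (by positivity)]
  nlinarith [sq_nonneg (2 * D * G * (u - 1) - b * (G - 1))]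

theorem dissipation_neg_of_neg {δ α P z : ℝ} (hb : 0 ≤ b) (hD : 0 < D) (hδ : 0 < δ)
    (hu : 0 < u) (hG : 0 < G) (hP : 0 < P) (hz : z < 0) :
    (u - 1) * (b * (G - 1) + D * G * (1 - u)) +
      (z - b / (2 * D * δ) * (|G - 1| ^ (1 - α) / (P * G))) *
        (D * G * u * (exp (-z) - 1) + P * (δ * b * |G - 1| ^ (1 + α))) < 0 := by
  set c := b / (2 * D * δ) * (|G - 1| ^ (1 - α) / (P * G))
  set A := D * G * u * (exp (-z) - 1)
  set B := P * (δ * b * |G - 1| ^ (1 + α))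
  have hA : 0 < A := by
    have : 1 < exp (-z) := one_lt_exp_iff.2 (by linarith)
    have : 0 < exp (-z) - 1 := by linarith
    positivity
  have hB : 0 ≤ B := by positivity
  have hc : 0 ≤ c := by positivity
  -- the exponents `1 - α` and `1 + α` are chosen so that this product is free of `α`
  have hcB : c * B = (b * (G - 1)) ^ 2 / (2 * D * G) := by
    have : |G - 1| ^ (1 - α) * |G - 1| ^ (1 + α) = (G - 1) ^ 2 := by
      rw [← rpow_add' (abs_nonneg _) (by norm_num), show 1 - α + (1 + α) = (2 : ℕ) by norm_num,
        rpow_natCast, sq_abs]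
    simp only [c, B]
    rw [mul_pow, ← this]
    field_simp
  have hε : (b * (G - 1)) ^ 2 / (4 * D * G) ≤ (b * (G - 1)) ^ 2 / (2 * D * G) :=
    div_le_div_of_nonneg_left (sq_nonneg _) (by positivity) (by linarith [mul_pos hD hG])
  nlinarith [cross_term_le (u := u) (b := b) hD hG, mul_neg_of_neg_of_pos hz hA,
    mul_nonpos_of_nonpos_of_nonneg hz.le hB, mul_nonneg hc hA.le]

theorem dissipation_neg_of_pos {R w C z : ℝ} (hD : 0 < D) (hR : 0 ≤ R) (hu : 0 < u) (hG : 0 < G)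
    (hz : 0 < z) (hw : w ≤ 1) (hwG : D * G * w ≤ G * (b + D) - b)
    (hC : |b * (G - 1)| ≤ C * (exp z - 1)) (hRw : C ^ 2 < R * (4 * D ^ 2 * w)) :
    (u - 1) * (b * (G - 1) + D * G * (1 - u)) +
      R * (exp z / G ^ 2 * (exp z - 1)) * (D * G * u * (exp (-z) - 1)) < 0 := by
  have ht : 0 < exp z - 1 := by linarith [one_lt_exp_iff.2 hz]
  have hV : R * (exp z / G ^ 2 * (exp z - 1)) * (D * G * u * (exp (-z) - 1)) =
      -(R * D * u * (exp z - 1) ^ 2 / G) := by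
    rw [exp_neg]
    field_simp
    ring
  rw [hV]
  rcases lt_or_ge u w with huw | huw
  · -- for small `u` the margin `G (b + D) - b` of Assumption (A) makes the cross term negative
    have hcross : (u - 1) * (b * (G - 1) + D * G * (1 - u)) < 0 := by
      refine mul_neg_of_neg_of_pos (by linarith) ?_
      nlinarith [mul_lt_mul_of_pos_left huw (mul_pos hD hG)]
    have : 0 ≤ R * D * u * (exp z - 1) ^ 2 / G := by positivity
    linarith
  · have hsq : (b * (G - 1)) ^ 2 ≤ C ^ 2 * (exp z - 1) ^ 2 := by
      rw [← mul_pow, ← sq_abs]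
      exact pow_le_pow_left₀ (abs_nonneg _) hC 2
    have hRu : C ^ 2 < R * (4 * D ^ 2 * u) := hRw.trans_le (by gcongr)
    have : (b * (G - 1)) ^ 2 / (4 * D * G) < R * D * u * (exp z - 1) ^ 2 / G := by
      rw [div_lt_div_iff₀ (by positivity) hG]
      nlinarith [mul_lt_mul_of_pos_right hRu (by positivity : 0 < (exp z - 1) ^ 2 * G)]
    linarith [cross_term_le (u := u) (b := b) hD hG]

end Dissipation

theorem lyapunov_dissipation_neg {b D δ α R w K : ℝ} {g p Q : ℝ → ℝ} (hb : 0 ≤ b) (hD : 0 < D)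
    (hδ : 0 < δ) (hα : α < 1) (hg : Continuous g) (hg_pos : ∀ z, 0 < g z) (hg0 : g 0 = 1)
    (hp : Continuous p) (hp_pos : ∀ z, 0 < p z) (hR : 0 ≤ R) (hw : w ≤ 1)
    (hwg : ∀ z, 0 < z → D * g z * w ≤ g z * (b + D) - b)
    (hK : ∀ z, 0 < z → |g z - 1| ≤ K * (exp z - 1)) (hRw : (b * K) ^ 2 < R * (4 * D ^ 2 * w))
    (hQ : ∀ z, Q z = if z ≤ 0 then
        1 / 2 * z ^ 2 + b / (2 * D * δ) * ∫ s in z..0, |g s - 1| ^ (1 - α) / (p s * g s)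
      else R * ∫ s in 0..z, exp s / g s ^ 2 * (exp s - 1))
    {x : ℝ × ℝ} (hx : x ≠ 0) :
    fderiv ℝ (fun y : ℝ × ℝ => exp y.1 - y.1 - 1 + Q y.2) x
      (b * (g x.2 - 1) + D * g x.2 * (1 - exp x.1),
        D * g x.2 * exp x.1 * (exp (-x.2) - 1) +
          p x.2 * if x.2 ≤ 0 then δ * b * |g x.2 - 1| ^ (1 + α) else 0) < 0 := by
  have hφ : HasDerivAt (fun t => exp t - t - 1) (exp x.1 - 1) x.1 := by
    simpa using ((hasDerivAt_exp x.1).sub (hasDerivAt_id x.1)).sub_const 1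
  have hf : Continuous fun s => |g s - 1| ^ (1 - α) / (p s * g s) :=
    ((hg.sub continuous_const).abs.rpow_const fun _ => Or.inr (by linarith)).div (hp.mul hg)
      fun s => (mul_pos (hp_pos s) (hg_pos s)).ne'
  have hι : Continuous fun s => exp s / g s ^ 2 * (exp s - 1) :=
    (continuous_exp.div (hg.pow 2) fun s => (pow_pos (hg_pos s) 2).ne').mul
      (continuous_exp.sub continuous_const)
  have hQ' := hasDerivAt_ite_integral hf hι
    (by simp [hg0, zero_rpow (by linarith : 1 - α ≠ 0)]) (by simp) hQ x.2
  rw [fderiv_fst_add_snd_apply hφ hQ']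
  rcases lt_trichotomy x.2 0 with h | h | h
  · simp only [if_pos h.le]
    exact dissipation_neg_of_neg hb hD hδ (exp_pos _) (hg_pos _) (hp_pos _) h
  · have hx1 : x.1 ≠ 0 := fun h1 => hx (Prod.ext h1 h)
    have he : exp x.1 - 1 ≠ 0 := by simpa [sub_eq_zero] using hx1
    simp only [h, hg0, le_refl, ↓reduceIte, sub_self, abs_zero,
      zero_rpow (show 1 - α ≠ 0 by linarith), zero_div, mul_zero, mul_one, zero_add, zero_mul,
      add_zero, neg_zero, exp_zero]
    nlinarith [mul_pos hD (sq_pos_of_ne_zero he)]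
  · simp only [if_neg h.not_ge, mul_zero, add_zero]
    refine dissipation_neg_of_pos hD hR (exp_pos _) (hg_pos _) h hw (hwg _ h) ?_ hRw
    rw [abs_mul, abs_of_nonneg hb, mul_assoc]
    exact mul_le_mul_of_nonneg_left (hK _ h) hb

theorem mul_feedback_sub {κ D G P y z r : ℝ} (hP : P = κ * exp (-z) + 1) (hP0 : P ≠ 0) :
    P * ((κ + 1) * D * G * exp (y - z) / P + r - D * G * exp y) =
      D * G * exp y * (exp (-z) - 1) + P * r := by
  rw [mul_sub, mul_add, mul_div_cancel₀ _ hP0, hP, sub_eq_add_neg y, exp_add]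
  ring

/-- The substrate concentration `S_in / p(z)`, written with `S_in = S* (κ + 1)`. -/
noncomputable def substrate (Sstar κ z : ℝ) : ℝ := Sstar * (κ + 1) / (κ * exp (-z) + 1)

section Substrate

variable {Sstar κ : ℝ}

theorem substrate_pos (hS : 0 < Sstar) (hκ : 0 ≤ κ) (z : ℝ) : 0 < substrate Sstar κ z := by
  unfold substrate
  positivity

theorem substrate_zero (hκ : 0 ≤ κ) : substrate Sstar κ 0 = Sstar := by
  simp [substrate, (by positivity : κ + 1 ≠ 0)]

theorem continuous_substrate (hκ : 0 ≤ κ) : Continuous (substrate Sstar κ) :=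
  continuous_const.div (by fun_prop) fun z => (by positivity : κ * exp (-z) + 1 ≠ 0)

theorem substrate_mem_Icc (hS : 0 ≤ Sstar) (hκ : 0 ≤ κ) {z : ℝ} (hz : 0 ≤ z) :
    substrate Sstar κ z ∈ Icc Sstar (Sstar * (κ + 1)) := by
  have hq : exp (-z) ≤ 1 := exp_le_one_iff.2 (by linarith)
  have hq0 := exp_pos (-z)
  unfold substrate
  constructor
  · rw [le_div_iff₀ (by positivity)]
    nlinarith [mul_le_mul_of_nonneg_left hq (mul_nonneg hS hκ)]
  · exact div_le_self (by positivity) (by nlinarith)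

theorem substrate_sub_le (hS : 0 ≤ Sstar) (hκ : 0 ≤ κ) {z : ℝ} (hz : 0 ≤ z) :
    substrate Sstar κ z - Sstar ≤ Sstar * κ * (exp z - 1) := by
  have hq0 := exp_pos (-z)
  have h1 : 1 - exp (-z) ≤ exp z - 1 := by
    linarith [add_one_le_exp z, add_one_le_exp (-z)]
  have h2 : substrate Sstar κ z - Sstar = Sstar * κ * (1 - exp (-z)) / (κ * exp (-z) + 1) := by
    unfold substrate
    field_simp
    ring
  rw [h2, div_le_iff₀ (by positivity)]
  have h3 : 0 ≤ Sstar * κ * (exp z - 1) * (κ * exp (-z)) := by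
    have : 0 ≤ exp z - 1 := by linarith [add_one_le_exp z]
    positivity
  nlinarith [mul_le_mul_of_nonneg_left h1 (mul_nonneg hS hκ)]

end Substrate

section Growth

variable {μ g : ℝ → ℝ} {Sstar κ : ℝ}

theorem continuous_comp_substrate (hμ : ContinuousOn μ (Ici 0)) (hS : 0 < Sstar) (hκ : 0 ≤ κ) :
    Continuous fun z => μ (substrate Sstar κ z) :=
  hμ.comp_continuous (continuous_substrate hκ) fun z => (substrate_pos hS hκ z).le

theorem exists_abs_sub_one_le (hμ : ContDiffOn ℝ 1 μ (Ici 0)) (hS : 0 ≤ Sstar) (hκ : 0 ≤ κ)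
    (hμS : 0 < μ Sstar) (hg : ∀ z, g z = μ (substrate Sstar κ z) / μ Sstar) :
    ∃ K, ∀ z, 0 ≤ z → |g z - 1| ≤ K * (exp z - 1) := by
  obtain ⟨L, hL⟩ := (hμ.mono fun S hS' => hS.trans hS'.1).exists_lipschitzOnWith one_ne_zero
    (convex_Icc Sstar (Sstar * (κ + 1))) isCompact_Icc
  refine ⟨L * (Sstar * κ) / μ Sstar, fun z hz => ?_⟩
  have hmem := substrate_mem_Icc hS hκ hz
  have hlip : |μ (substrate Sstar κ z) - μ Sstar| ≤ L * |substrate Sstar κ z - Sstar| := by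
    simpa [Real.dist_eq] using hL.dist_le_mul _ hmem _ (left_mem_Icc.2 (hmem.1.trans hmem.2))
  rw [hg, div_sub_one hμS.ne', abs_div, abs_of_pos hμS, div_le_iff₀ hμS, div_mul_eq_mul_div,
    div_mul_cancel₀ _ hμS.ne']
  calc |μ (substrate Sstar κ z) - μ Sstar| ≤ L * |substrate Sstar κ z - Sstar| := hlip
    _ ≤ L * (Sstar * κ * (exp z - 1)) := by
      rw [abs_of_nonneg (sub_nonneg.2 hmem.1)]
      exact mul_le_mul_of_nonneg_left (substrate_sub_le hS hκ hz) L.2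
    _ = L * (Sstar * κ) * (exp z - 1) := by ring

theorem exists_mul_le_margin {p0 b D : ℝ} (hμ : ContinuousOn μ (Icc Sstar (Sstar * (κ + 1))))
    (hS : 0 ≤ Sstar) (hκ : 0 ≤ κ) (hμS : 0 < μ Sstar) (hD : 0 < D)
    (heq : p0 * μ Sstar = b + D) (hA : ∀ S ∈ Icc Sstar (Sstar * (κ + 1)), b < p0 * μ S)
    (hg : ∀ z, g z = μ (substrate Sstar κ z) / μ Sstar) :
    ∃ w > 0, w ≤ 1 ∧ ∀ z, 0 ≤ z → D * g z * w ≤ g z * (b + D) - b := by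
  have hS_mem : Sstar ∈ Icc Sstar (Sstar * (κ + 1)) := left_mem_Icc.2 (by nlinarith)
  obtain ⟨Sm, hSm, hmin⟩ := isCompact_Icc.exists_isMinOn ⟨_, hS_mem⟩
    ((continuousOn_const.mul hμ).sub continuousOn_const)
  obtain ⟨SM, -, hmax⟩ := isCompact_Icc.exists_isMaxOn ⟨_, hS_mem⟩ hμ
  have hm : 0 < p0 * μ Sm - b := sub_pos.2 (hA _ hSm)
  have hM : 0 < μ SM := hμS.trans_le (hmax hS_mem)
  refine ⟨min 1 ((p0 * μ Sm - b) * μ Sstar / (D * μ SM)), by positivity, min_le_left _ _,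
    fun z hz => ?_⟩
  have hSz := substrate_mem_Icc hS hκ hz
  have hgM : g z ≤ μ SM / μ Sstar := by
    rw [hg]
    exact div_le_div_of_nonneg_right (hmax hSz) hμS.le
  calc D * g z * min 1 ((p0 * μ Sm - b) * μ Sstar / (D * μ SM))
      ≤ D * (μ SM / μ Sstar) * ((p0 * μ Sm - b) * μ Sstar / (D * μ SM)) :=
        mul_le_mul (by gcongr) (min_le_right _ _) (by positivity) (by positivity)
    _ = p0 * μ Sm - b := by field_simp
    _ ≤ p0 * μ (substrate Sstar κ z) - b := hmin hSz
    _ = g z * (b + D) - b := by rw [hg, ← heq]; field_simp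

end Growth

theorem stmt_4_general
    (S_in Sstar p0 b Dstar : ℝ) (μ : ℝ → ℝ)
    (hSstar : Sstar ∈ Set.Ioo 0 S_in)
    (hb : 0 ≤ b) (hDstar : 0 < Dstar)
    (hμ_C1 : ContDiffOn ℝ 1 μ (Set.Ici 0))
    (hμ_pos : ∀ S, 0 < S → 0 < μ S)
    (heq : p0 * μ Sstar = b + Dstar)
    (κ : ℝ) (hκ : κ = (S_in - Sstar) / Sstar)
    (p g : ℝ → ℝ)
    (hp : ∀ z, p z = κ * Real.exp (-z) + 1)
    (hg : ∀ z, g z = μ (S_in / p z) / μ Sstar)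
    -- Assumption (A)
    (hA : ∀ S ∈ Set.Icc Sstar S_in, b < p0 * μ S)
    (δ α : ℝ) (hδ : 0 < δ) (hα : α ∈ Set.Ico (0 : ℝ) 1)
    -- feedback law
    (D : ℝ × ℝ → ℝ)
    (hD : ∀ x : ℝ × ℝ, D x =
      (κ + 1) * Dstar * g x.2 * Real.exp (x.1 - x.2) / p x.2 +
        (if x.2 ≤ 0 then δ * b * |g x.2 - 1| ^ (1 + α) else 0))
    -- closed-loop vector field
    (F : ℝ × ℝ → ℝ × ℝ)
    (hF : ∀ x : ℝ × ℝ, F x =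
      (b * (g x.2 - 1) + Dstar * g x.2 * (1 - Real.exp x.1),
       p x.2 * (D x - Dstar * g x.2 * Real.exp x.1))) :
    ∃ R > (0 : ℝ), ∀ Q : ℝ → ℝ,
      (∀ z, Q z = if z ≤ 0 then
          (1/2) * z^2 + (b / (2 * Dstar * δ)) *
            ∫ s in z..(0:ℝ), |g s - 1| ^ (1 - α) / (p s * g s)
        else
          R * ∫ s in (0:ℝ)..z, (Real.exp s / (g s)^2) * (Real.exp s - 1)) →
      ∀ V : ℝ × ℝ → ℝ,
        (∀ x : ℝ × ℝ, V x = Real.exp x.1 - x.1 - 1 + Q x.2) →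
        ∀ x : ℝ × ℝ, x ≠ 0 → fderiv ℝ V x (F x) < 0 := by
  obtain ⟨hS0, hSlt⟩ := hSstar
  have hκ0 : 0 < κ := hκ ▸ div_pos (sub_pos.2 hSlt) hS0
  have hS_in : S_in = Sstar * (κ + 1) := by rw [hκ]; field_simp; ring
  have hμS : 0 < μ Sstar := hμ_pos _ hS0
  have hg' : ∀ z, g z = μ (substrate Sstar κ z) / μ Sstar := fun z => by rw [hg, hp, hS_in]; rfl
  have hg_pos : ∀ z, 0 < g z := fun z =>
    hg' z ▸ div_pos (hμ_pos _ (substrate_pos hS0 hκ0.le z)) hμS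
  have hg_cont : Continuous g :=
    funext hg' ▸ (continuous_comp_substrate hμ_C1.continuousOn hS0 hκ0.le).div_const _
  have hp_pos : ∀ z, 0 < p z := fun z => hp z ▸ by positivity
  obtain ⟨w, hw0, hw1, hwg⟩ := exists_mul_le_margin
    (hμ_C1.continuousOn.mono fun S hS => hS0.le.trans hS.1) hS0.le hκ0.le hμS hDstar heq
    (hS_in ▸ hA) hg'
  obtain ⟨K, hK⟩ := exists_abs_sub_one_le hμ_C1 hS0.le hκ0.le hμS hg'
  obtain ⟨R, hR, hRw⟩ := exists_pos_lt_mul (by positivity : 0 < 4 * Dstar ^ 2 * w) ((b * K) ^ 2)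
  refine ⟨R, hR, fun Q hQ V hV x hx => ?_⟩
  rw [funext hV, hF x, hD x, mul_feedback_sub (hp x.2) (hp_pos x.2).ne']
  exact lyapunov_dissipation_neg hb hDstar hδ hα.2 hg_cont hg_pos
    (by rw [hg', substrate_zero hκ0.le, div_self hμS.ne']) (by rw [funext hp]; fun_prop) hp_pos
    hR.le hw1 (fun z hz => hwg z hz.le) (fun z hz => hK z hz.le) hRw hQ hx

/-- Under Assumption (A), there exists R > 0 such that the Lyapunov
dissipation inequality ∇V(x)·F(x) < 0 holds for all x ≠ 0. -/
theorem stmt_4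
    (S_in Sstar p0 b Dstar : ℝ) (μ : ℝ → ℝ)
    (hSin : 0 < S_in) (hSstar : Sstar ∈ Set.Ioo 0 S_in)
    (hp0 : 0 < p0) (hb : 0 ≤ b) (hDstar : 0 < Dstar)
    (hμ_bdd : BddAbove (Set.range μ))
    (hμ_C1 : ContDiffOn ℝ 1 μ (Set.Ici 0))
    (hμ_nonneg : ∀ S, 0 ≤ S → 0 ≤ μ S)
    (hμ_zero : μ 0 = 0) (hμ_pos : ∀ S, 0 < S → 0 < μ S)
    (heq : p0 * μ Sstar = b + Dstar)
    (κ : ℝ) (hκ : κ = (S_in - Sstar) / Sstar)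
    (p g : ℝ → ℝ)
    (hp : ∀ z, p z = κ * Real.exp (-z) + 1)
    (hg : ∀ z, g z = μ (S_in / p z) / μ Sstar)
    -- Assumption (A)
    (hA : ∀ S ∈ Set.Icc Sstar S_in, b < p0 * μ S)
    (δ α : ℝ) (hδ : 0 < δ) (hα : α ∈ Set.Ico (0 : ℝ) 1)
    -- feedback law
    (D : ℝ × ℝ → ℝ)
    (hD : ∀ x : ℝ × ℝ, D x =
      (κ + 1) * Dstar * g x.2 * Real.exp (x.1 - x.2) / p x.2 +
        (if x.2 ≤ 0 then δ * b * |g x.2 - 1| ^ (1 + α) else 0))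
    -- closed-loop vector field
    (F : ℝ × ℝ → ℝ × ℝ)
    (hF : ∀ x : ℝ × ℝ, F x =
      (b * (g x.2 - 1) + Dstar * g x.2 * (1 - Real.exp x.1),
       p x.2 * (D x - Dstar * g x.2 * Real.exp x.1))) :
    ∃ R > (0 : ℝ), ∀ Q : ℝ → ℝ,
      (∀ z, Q z = if z ≤ 0 then
          (1/2) * z^2 + (b / (2 * Dstar * δ)) *
            ∫ s in z..(0:ℝ), |g s - 1| ^ (1 - α) / (p s * g s)
        else
          R * ∫ s in (0:ℝ)..z, (Real.exp s / (g s)^2) * (Real.exp s - 1)) →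
      ∀ V : ℝ × ℝ → ℝ,
        (∀ x : ℝ × ℝ, V x = Real.exp x.1 - x.1 - 1 + Q x.2) →
        ∀ x : ℝ × ℝ, x ≠ 0 → fderiv ℝ V x (F x) < 0 :=
  stmt_4_general S_in Sstar p0 b Dstar μ hSstar hb hDstar hμ_C1 hμ_pos heq κ hκ p g hp hg hA δ α hδ
    hα D hD F hF
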